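/- Let A ∈ ℝ^{n×n} be K-monotone, let A = U − V be a K-regular splitting and U = F − G a K-weak regular splitting of type II with V F⁻¹ G = G F⁻¹ V, and let s ≥ 1 be an integer. If G ≥_K G F⁻¹ G, then the induced splitting A = P_s − T̂_s P_s is a K-regular splitting, i.e., Q_s = Σ_{j=0}^{s−1} (F⁻¹G)^j F⁻¹ is invertible with inverse P_s, Q_s ≥_K 0, and T̂_s P_s ≥_K 0. -/

import Mathlib

open Matrix Finset Filter

/-- A proper cone in `ℝ^n`: a closed, pointed, solid convex cone. -/
def IsProperCone {n : ℕ} (K : Set (Fin n → ℝ)) : Prop :=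
  IsClosed K ∧ Convex ℝ K ∧ (∀ c : ℝ, 0 ≤ c → ∀ x ∈ K, c • x ∈ K) ∧
    K ∩ (-K) = {0} ∧ (interior K).Nonempty

/-- `M ≥_K 0`: the matrix `M` leaves the cone `K` invariant. -/
def KNonneg {n : ℕ} (K : Set (Fin n → ℝ)) (M : Matrix (Fin n) (Fin n) ℝ) : Prop :=
  ∀ x ∈ K, M.mulVec x ∈ K

/-- Spectral radius: the supremum of the moduli of the complex eigenvalues. -/
noncomputable def specRad {n : ℕ} (M : Matrix (Fin n) (Fin n) ℝ) : ℝ :=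
  sSup ((fun z : ℂ => ‖z‖) '' spectrum ℂ (M.map Complex.ofReal))

/-- `A = U - V` is a `K`-regular splitting. -/
def KRegularSplitting {n : ℕ} (K : Set (Fin n → ℝ))
    (A U V : Matrix (Fin n) (Fin n) ℝ) : Prop :=
  A = U - V ∧ IsUnit U ∧ KNonneg K U⁻¹ ∧ KNonneg K V

/-- `A = U - V` is a `K`-weak regular splitting of type I. -/
def KWeakRegularSplittingI {n : ℕ} (K : Set (Fin n → ℝ))
    (A U V : Matrix (Fin n) (Fin n) ℝ) : Prop :=
  A = U - V ∧ IsUnit U ∧ KNonneg K U⁻¹ ∧ KNonneg K (U⁻¹ * V)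

/-- `A = U - V` is a `K`-weak regular splitting of type II. -/
def KWeakRegularSplittingII {n : ℕ} (K : Set (Fin n → ℝ))
    (A U V : Matrix (Fin n) (Fin n) ℝ) : Prop :=
  A = U - V ∧ IsUnit U ∧ KNonneg K U⁻¹ ∧ KNonneg K (V * U⁻¹)

/-- `A` is `K`-monotone: invertible with `A⁻¹ ≥_K 0`. -/
def KMonotone {n : ℕ} (K : Set (Fin n → ℝ)) (A : Matrix (Fin n) (Fin n) ℝ) : Prop :=
  IsUnit A ∧ KNonneg K A⁻¹

/-- Two-stage iteration matrix `T_s = (F⁻¹G)^s + Σ_{j=0}^{s-1} (F⁻¹G)^j F⁻¹ V`. -/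
noncomputable def twoStageT {n : ℕ} (F G V : Matrix (Fin n) (Fin n) ℝ) (s : ℕ) :
    Matrix (Fin n) (Fin n) ℝ :=
  (F⁻¹ * G) ^ s + (∑ j ∈ Finset.range s, (F⁻¹ * G) ^ j) * (F⁻¹ * V)

/-- `T̂_s = (GF⁻¹)^s + Σ_{j=0}^{s-1} (GF⁻¹)^j V F⁻¹`. -/
noncomputable def twoStageThat {n : ℕ} (F G V : Matrix (Fin n) (Fin n) ℝ) (s : ℕ) :
    Matrix (Fin n) (Fin n) ℝ :=
  (G * F⁻¹) ^ s + (∑ j ∈ Finset.range s, (G * F⁻¹) ^ j) * (V * F⁻¹)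

/-- `Q_s = Σ_{j=0}^{s-1} (F⁻¹G)^j F⁻¹`. -/
noncomputable def twoStageQ {n : ℕ} (F G : Matrix (Fin n) (Fin n) ℝ) (s : ℕ) :
    Matrix (Fin n) (Fin n) ℝ :=
  (∑ j ∈ Finset.range s, (F⁻¹ * G) ^ j) * F⁻¹


/-! With `B = G F⁻¹`, type II and `G ≥_K G F⁻¹ G` say `B ≥_K 0` and `B ≥_K B ^ 2`, so the powers
of `B` decrease in the cone order; since `1 - B = U F⁻¹` is invertible, they tend to `0`. Hence
`(1 - B ^ s)⁻¹ = ∑ B ^ (s i) ≥_K 0`, and `Q_s = F⁻¹ ∑_{j<s} B ^ j` has the explicit left inverse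
`P_s = U + R` with `R = (1 - B ^ s)⁻¹ B ^ (s - 1) (G - G F⁻¹ G) ≥_K 0`. The commutation of `V F⁻¹`
with `B` gives `A Q_s = 1 - T̂_s`, so `T̂_s P_s = P_s - A = V + R ≥_K 0`. -/

attribute [local instance] Matrix.normedAddCommGroup Matrix.normedSpace

open Metric Topology

namespace IsProperCone

variable {n : ℕ} {K : Set (Fin n → ℝ)}

theorem zero_mem (hK : IsProperCone K) : (0 : Fin n → ℝ) ∈ K :=
  (hK.2.2.2.1.symm.subset rfl).1

theorem add_mem (hK : IsProperCone K) {x y : Fin n → ℝ} (hx : x ∈ K) (hy : y ∈ K) :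
    x + y ∈ K := by
  have hmid := hK.2.1 hx hy (by norm_num : (0 : ℝ) ≤ 1 / 2) (by norm_num : (0 : ℝ) ≤ 1 / 2)
    (by norm_num)
  simpa [← smul_add, smul_smul] using hK.2.2.1 2 (by norm_num) _ hmid

theorem span_eq_top (hK : IsProperCone K) : Submodule.span ℝ K = ⊤ :=
  (Submodule.span ℝ K).eq_top_of_nonempty_interior'
    (hK.2.2.2.2.mono (interior_mono Submodule.subset_span))

end IsProperCone

namespace KNonneg

variable {n : ℕ} {K : Set (Fin n → ℝ)} {M N : Matrix (Fin n) (Fin n) ℝ}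

theorem zero (hK : IsProperCone K) : KNonneg K 0 := fun x _ => by
  simpa using hK.zero_mem

theorem one : KNonneg K 1 := fun x hx => by simpa using hx

theorem add (hK : IsProperCone K) (hM : KNonneg K M) (hN : KNonneg K N) :
    KNonneg K (M + N) := fun x hx => by
  simpa [Matrix.add_mulVec] using hK.add_mem (hM x hx) (hN x hx)

theorem mul (hM : KNonneg K M) (hN : KNonneg K N) : KNonneg K (M * N) := fun x hx => by
  simpa [← Matrix.mulVec_mulVec] using hM _ (hN x hx)

theorem pow (hM : KNonneg K M) (k : ℕ) : KNonneg K (M ^ k) := by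
  induction k with
  | zero => simpa using one
  | succ k ih => simpa [pow_succ] using ih.mul hM

theorem sum (hK : IsProperCone K) {ι : Type*} {t : Finset ι}
    {f : ι → Matrix (Fin n) (Fin n) ℝ} (h : ∀ j ∈ t, KNonneg K (f j)) :
    KNonneg K (∑ j ∈ t, f j) :=
  Finset.sum_induction f (KNonneg K) (fun _ _ => add hK) (zero hK) h

theorem smul (hK : IsProperCone K) {c : ℝ} (hc : 0 ≤ c) (hM : KNonneg K M) :
    KNonneg K (c • M) := fun x hx => by
  simpa [Matrix.smul_mulVec] using hK.2.2.1 c hc _ (hM x hx)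

theorem of_tendsto (hK : IsProperCone K) {α : Type*} {l : Filter α} [l.NeBot]
    {f : α → Matrix (Fin n) (Fin n) ℝ} (hf : Tendsto f l (𝓝 M))
    (h : ∀ a, KNonneg K (f a)) : KNonneg K M := fun x hx =>
  hK.1.mem_of_tendsto (((continuous_id.matrix_mulVec continuous_const).tendsto M).comp hf)
    (Eventually.of_forall fun a => h a x hx)

theorem eq_zero_of_neg (hK : IsProperCone K) (hM : KNonneg K M) (hM' : KNonneg K (-M)) :
    M = 0 := by
  have hK0 : ∀ x ∈ K, M *ᵥ x = 0 := fun x hx => by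
    have hpm : M *ᵥ x ∈ K ∩ -K := ⟨hM x hx, by simpa [Matrix.neg_mulVec] using hM' x hx⟩
    rwa [hK.2.2.2.1] at hpm
  have hlin : M.mulVecLin = 0 := LinearMap.ext_on hK.span_eq_top hK0
  exact Matrix.ext_iff_mulVec.2 fun v => by simpa using LinearMap.congr_fun hlin v

end KNonneg

theorem Matrix.isUnit_one_sub_of_tendsto_pow {n : ℕ} {C : Matrix (Fin n) (Fin n) ℝ}
    (h : Tendsto (fun m => C ^ m) atTop (𝓝 0)) :
    IsUnit (1 - C) := by
  have hdet : Tendsto (fun m => (1 - C ^ m).det) atTop (𝓝 1) := by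
    simpa [Function.comp_def] using (((continuous_const (y := (1 : Matrix (Fin n) (Fin n) ℝ)).sub
      continuous_id).matrix_det).tendsto 0).comp h
  obtain ⟨m, hm⟩ := (hdet.eventually (isOpen_ne.mem_nhds one_ne_zero)).exists
  have hcomm : Commute (1 - C) (∑ i ∈ Finset.range m, C ^ i) :=
    (mul_neg_geom_sum C m).trans (geom_sum_mul_neg C m).symm
  refine (hcomm.isUnit_mul_iff.1 ?_).1
  rw [mul_neg_geom_sum, Matrix.isUnit_iff_isUnit_det]
  exact isUnit_iff_ne_zero.2 hm

namespace KNonneg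

variable {n : ℕ} {K : Set (Fin n → ℝ)} {B C : Matrix (Fin n) (Fin n) ℝ}

/-- The cone of `K`-nonnegative matrices is normal. -/
theorem exists_norm_le (hK : IsProperCone K) :
    ∃ c : ℝ, ∀ M N : Matrix (Fin n) (Fin n) ℝ,
      KNonneg K M → KNonneg K (N - M) → ‖M‖ ≤ c * ‖N‖ := by
  by_contra! h
  choose M N hM hNM hlt using fun k : ℕ => h (k + 1)
  have hMpos : ∀ k, 0 < ‖M k‖ := fun k => (by positivity : (0 : ℝ) ≤ _).trans_lt (hlt k)
  have hball : ∀ k, ‖M k‖⁻¹ • M k ∈ closedBall (0 : Matrix (Fin n) (Fin n) ℝ) 1 := fun k => by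
    simp [norm_smul, inv_mul_cancel₀ (hMpos k).ne']
  obtain ⟨L, -, φ, hφ, hL⟩ := (isCompact_closedBall _ _).tendsto_subseq hball
  have hLnorm : ‖L‖ = 1 :=
    tendsto_nhds_unique hL.norm (by simp [norm_smul, inv_mul_cancel₀ (hMpos _).ne'])
  have hN0 : Tendsto (fun k => ‖M k‖⁻¹ • N k) atTop (𝓝 0) := by
    refine squeeze_zero_norm (fun k => ?_) tendsto_one_div_add_atTop_nhds_zero_nat
    rw [norm_smul, norm_inv, norm_norm, inv_mul_le_iff₀ (hMpos k), mul_one_div,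
      le_div_iff₀ (by positivity)]
    exact (mul_comm _ _).trans_le (hlt k).le
  have hLpos : KNonneg K L := of_tendsto hK hL fun k => smul hK (by positivity) (hM _)
  have hLneg : KNonneg K (-L) := by
    refine of_tendsto hK (by simpa using (hN0.comp hφ.tendsto_atTop).sub hL) fun k => ?_
    simpa [Function.comp_def, smul_sub] using smul hK (by positivity) (hNM (φ k))
  simp [eq_zero_of_neg hK hLpos hLneg] at hLnorm

theorem pow_sub_pow (hK : IsProperCone K) (hB : KNonneg K B) (hBB : KNonneg K (B - B ^ 2))
    {a b : ℕ} (ha : 1 ≤ a) (hab : a ≤ b) : KNonneg K (B ^ a - B ^ b) := by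
  induction b, hab using Nat.le_induction with
  | base => simpa using zero hK
  | succ b hab ih =>
    obtain ⟨c, rfl⟩ : ∃ c, b = c + 1 := ⟨b - 1, by omega⟩
    have hstep : B ^ c * (B - B ^ 2) = B ^ (c + 1) - B ^ (c + 1 + 1) := by
      rw [mul_sub, ← pow_succ, ← pow_add]
    simpa [hstep] using ih.add hK ((hB.pow c).mul hBB)

/-- The powers `B ^ m` (`m ≥ 1`) decrease in the cone order; by normality and compactness a
subsequence converges to some `P` with `P * B = P`, forcing `P = 0` since `1 - B` is invertible,
and normality upgrades the subsequence to the whole sequence. -/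
theorem tendsto_pow_atTop_nhds_zero (hK : IsProperCone K) (hB : KNonneg K B)
    (hBB : KNonneg K (B - B ^ 2)) (h1B : IsUnit (1 - B)) :
    Tendsto (fun m => B ^ m) atTop (𝓝 0) := by
  obtain ⟨c, hc⟩ := exists_norm_le hK
  have hdecr : ∀ {a b : ℕ}, 1 ≤ a → a ≤ b → KNonneg K (B ^ a - B ^ b) :=
    pow_sub_pow hK hB hBB
  have hbdd : ∀ m, B ^ (m + 1) ∈ closedBall (0 : Matrix (Fin n) (Fin n) ℝ) (c * ‖B‖) :=
    fun m => by
      simpa using hc _ B (hB.pow _) (by simpa using hdecr le_rfl (by omega : 1 ≤ m + 1))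
  obtain ⟨P, -, φ, hφ, hP⟩ := (isCompact_closedBall _ _).tendsto_subseq hbdd
  have hPB : Tendsto (fun k => B ^ (φ k + 1 + 1)) atTop (𝓝 (P * B)) :=
    (((continuous_id.matrix_mul continuous_const).tendsto P).comp hP).congr fun k =>
      (pow_succ B (φ k + 1)).symm
  have hle : KNonneg K (P - P * B) :=
    of_tendsto hK (hP.sub hPB) fun k => hdecr (by omega) (by omega)
  have hge : KNonneg K (P * B - P) :=
    of_tendsto hK (hPB.sub (hP.comp (tendsto_add_atTop_nat 1))) fun k =>
      hdecr (by omega) (by simpa using hφ (lt_add_one k))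
  have hP0 : P = 0 := by
    refine (h1B.mul_left_eq_zero).1 ?_
    rw [mul_sub, mul_one]
    exact eq_zero_of_neg hK hle (by rwa [neg_sub])
  have hsub : Tendsto (fun k => c * ‖B ^ (φ k + 1)‖) atTop (𝓝 0) := by
    simpa [hP0] using hP.norm.const_mul c
  refine Metric.tendsto_atTop.2 fun ε hε => ?_
  obtain ⟨k, hk⟩ := (hsub.eventually (gt_mem_nhds hε)).exists
  refine ⟨φ k + 1, fun m hm => ?_⟩
  rw [dist_zero_right]
  exact (hc _ _ (hB.pow m) (hdecr (by omega) hm)).trans_lt hk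

/-- Neumann series: `(1 - C)⁻¹ = ∑ C ^ i`. -/
theorem inv_one_sub (hK : IsProperCone K) (hC : KNonneg K C)
    (h : Tendsto (fun m => C ^ m) atTop (𝓝 0)) : KNonneg K (1 - C)⁻¹ := by
  have hdet := (Matrix.isUnit_iff_isUnit_det _).1 (Matrix.isUnit_one_sub_of_tendsto_pow h)
  have hpartial : ∀ m, ∑ i ∈ Finset.range m, C ^ i = (1 - C)⁻¹ * (1 - C ^ m) := fun m => by
    rw [← mul_neg_geom_sum, Matrix.nonsing_inv_mul_cancel_left _ _ hdet]
  refine of_tendsto hK (l := atTop) (f := fun m => ∑ i ∈ Finset.range m, C ^ i) ?_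
    fun m => sum hK fun i _ => hC.pow i
  simpa [hpartial, Function.comp_def] using
    ((continuous_const.matrix_mul continuous_id).tendsto _).comp (h.const_sub 1)

end KNonneg

section TwoStage

variable {n : ℕ} {F G V : Matrix (Fin n) (Fin n) ℝ}

theorem twoStageQ_eq (F G : Matrix (Fin n) (Fin n) ℝ) (s : ℕ) :
    twoStageQ F G s = F⁻¹ * ∑ j ∈ Finset.range s, (G * F⁻¹) ^ j := by
  have hconj : SemiconjBy F⁻¹ (G * F⁻¹) (F⁻¹ * G) := (mul_assoc _ _ _).symm
  simp only [twoStageQ, Finset.sum_mul, Finset.mul_sum, (hconj.pow_right _).eq]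

theorem sub_mul_inv_eq (hF : IsUnit F) (G : Matrix (Fin n) (Fin n) ℝ) :
    (F - G) * F⁻¹ = 1 - G * F⁻¹ := by
  rw [sub_mul, Matrix.mul_nonsing_inv F ((Matrix.isUnit_iff_isUnit_det F).1 hF)]

theorem mul_twoStageQ_eq_one (hF : IsUnit F) {s : ℕ} (hs : 1 ≤ s)
    (h : IsUnit (1 - (G * F⁻¹) ^ s)) :
    (F - G + (1 - (G * F⁻¹) ^ s)⁻¹ * ((G * F⁻¹) ^ (s - 1) * (G - G * F⁻¹ * G))) *
      twoStageQ F G s = 1 := by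
  obtain ⟨t, rfl⟩ : ∃ t, s = t + 1 := ⟨s - 1, by omega⟩
  set B := G * F⁻¹
  set S := ∑ j ∈ Finset.range (t + 1), B ^ j
  set X := 1 - B ^ (t + 1)
  have hD : B ^ t * ((G - G * F⁻¹ * G) * F⁻¹) = B ^ (t + 1) * (1 - B) := by
    simp only [B, sub_mul, mul_sub, mul_one, pow_succ, mul_assoc]
  have hXB : B ^ (t + 1) * X = X * B ^ (t + 1) := by
    simp only [X, mul_sub, sub_mul, mul_one, one_mul, ← pow_add]
  calc (F - G + X⁻¹ * (B ^ t * (G - G * F⁻¹ * G))) * twoStageQ F G (t + 1)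
      = (F - G) * F⁻¹ * S + X⁻¹ * (B ^ t * ((G - G * F⁻¹ * G) * F⁻¹) * S) := by
        simp only [twoStageQ_eq, add_mul, mul_assoc]; rfl
    _ = X + X⁻¹ * (X * B ^ (t + 1)) := by
        rw [sub_mul_inv_eq hF, hD, mul_assoc, mul_neg_geom_sum, hXB]
    _ = 1 := by
        rw [Matrix.nonsing_inv_mul_cancel_left _ _ ((Matrix.isUnit_iff_isUnit_det X).1 h),
          sub_add_cancel]

theorem sub_sub_mul_twoStageQ (hF : IsUnit F) (hcomm : V * F⁻¹ * G = G * F⁻¹ * V) (s : ℕ) :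
    (F - G - V) * twoStageQ F G s = 1 - twoStageThat F G V s := by
  have hWB : Commute (V * F⁻¹) (G * F⁻¹) := by
    simp only [Commute, SemiconjBy, ← mul_assoc, hcomm]
  have hWS : Commute (V * F⁻¹) (∑ j ∈ Finset.range s, (G * F⁻¹) ^ j) :=
    Commute.sum_right _ _ _ fun j _ => hWB.pow_right j
  rw [twoStageQ_eq, twoStageThat, ← mul_assoc, sub_mul (F - G), sub_mul_inv_eq hF, sub_mul,
    mul_neg_geom_sum, hWS.eq, sub_sub]

end TwoStage

theorem stmt_10_general {n : ℕ} (K : Set (Fin n → ℝ)) (hK : IsProperCone K)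
    (A U V F G : Matrix (Fin n) (Fin n) ℝ)
    (houter : KRegularSplitting K A U V)
    (hinner : KWeakRegularSplittingII K U F G)
    (hcomm : V * F⁻¹ * G = G * F⁻¹ * V)
    (hG : KNonneg K (G - G * F⁻¹ * G)) (s : ℕ) (hs : 1 ≤ s) :
    IsUnit (twoStageQ F G s) ∧ KNonneg K (twoStageQ F G s) ∧
    A = (twoStageQ F G s)⁻¹ - twoStageThat F G V s * (twoStageQ F G s)⁻¹ ∧
    KNonneg K (twoStageThat F G V s * (twoStageQ F G s)⁻¹) := by
  obtain ⟨rfl, hU, -, hV⟩ := houter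
  obtain ⟨rfl, hF, hFinv, hB⟩ := hinner
  have hBB : KNonneg K (G * F⁻¹ - (G * F⁻¹) ^ 2) := by
    simpa [sq, sub_mul, mul_assoc] using hG.mul hFinv
  have h1B : IsUnit (1 - G * F⁻¹) := by
    simpa [sub_mul_inv_eq hF] using hU.mul ((Matrix.isUnit_nonsing_inv_iff).2 hF)
  have hpow : Tendsto (fun m => ((G * F⁻¹) ^ s) ^ m) atTop (𝓝 0) := by
    simpa [Function.comp_def, ← pow_mul] using
      (KNonneg.tendsto_pow_atTop_nhds_zero hK hB hBB h1B).comp (tendsto_id.const_mul_atTop' hs)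
  have hleft := mul_twoStageQ_eq_one hF hs (Matrix.isUnit_one_sub_of_tendsto_pow hpow)
  have hQdet : IsUnit (twoStageQ F G s).det := Matrix.isUnit_det_of_left_inverse hleft
  have hsplit : F - G - V =
      (twoStageQ F G s)⁻¹ - twoStageThat F G V s * (twoStageQ F G s)⁻¹ := by
    rw [← one_sub_mul, ← sub_sub_mul_twoStageQ hF hcomm,
      Matrix.mul_nonsing_inv_cancel_right _ _ hQdet]
  refine ⟨(Matrix.isUnit_iff_isUnit_det _).2 hQdet, ?_, hsplit, ?_⟩
  · rw [twoStageQ_eq]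
    exact hFinv.mul (KNonneg.sum hK fun j _ => hB.pow j)
  · rw [Matrix.inv_eq_left_inv hleft] at hsplit ⊢
    rw [(sub_eq_iff_comm.1 hsplit.symm).symm, add_sub_sub_cancel]
    exact ((KNonneg.inv_one_sub hK (hB.pow s) hpow).mul ((hB.pow _).mul hG)).add hK hV

theorem stmt_10 {n : ℕ} (K : Set (Fin n → ℝ)) (hK : IsProperCone K)
    (A U V F G : Matrix (Fin n) (Fin n) ℝ)
    (hmono : KMonotone K A)
    (houter : KRegularSplitting K A U V)
    (hinner : KWeakRegularSplittingII K U F G)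
    (hcomm : V * F⁻¹ * G = G * F⁻¹ * V)
    (hG : KNonneg K (G - G * F⁻¹ * G)) (s : ℕ) (hs : 1 ≤ s) :
    IsUnit (twoStageQ F G s) ∧ KNonneg K (twoStageQ F G s) ∧
    A = (twoStageQ F G s)⁻¹ - twoStageThat F G V s * (twoStageQ F G s)⁻¹ ∧
    KNonneg K (twoStageThat F G V s * (twoStageQ F G s)⁻¹) :=
  stmt_10_general K hK A U V F G houter hinner hcomm hG s hs
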